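/- Let n ≥ 1 and let ψ_0, …, ψ_n be real-valued functions in L²(ℝ) with ∫_ℝ ψ_l ψ_m dλ = δ_{lm} for 0 ≤ l, m ≤ n, and suppose there are reals r_0, …, r_{n-1} > 0 and s_0, …, s_{n-1} (with the convention r_{-1} = 0, ψ_{-1} = 0) such that for all λ ∈ ℝ and 0 ≤ l ≤ n-1: λ ψ_l(λ) = r_l ψ_{l+1}(λ) + s_l ψ_l(λ) + r_{l-1} ψ_{l-1}(λ). Define p_n(λ_1, …, λ_n) = (det{ψ_{j-1}(λ_k)}_{j,k=1}^n)² / n!. Then for every bounded measurable φ : ℝ → ℝ, the variance of N_n[φ] = Σ_{l=1}^n φ(λ_l) with respect to p_n equals ∫_ℝ ∫_ℝ ((φ(λ_1) - φ(λ_2))/(λ_1 - λ_2))² · (1/2) [ r_{n-1} ( ψ_n(λ_1) ψ_{n-1}(λ_2) - ψ_{n-1}(λ_1) ψ_n(λ_2) ) ]² dλ_1 dλ_2. -/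

import Mathlib

/-!
Expanding the squared determinant and integrating coordinate by coordinate, the expectation of
`∏ₖ wₖ(λₖ)` under `p_n` is `(n!)⁻¹ ∑_{σ,π} sign π ∏ₖ ∫ wₖ ψ_{σ k} ψ_{σ (π k)}`. When `wₖ = 1`
off one or two coordinates, orthonormality kills every `π` that moves another coordinate, which
leaves a `1 × 1` or `2 × 2` determinant in the matrices `A = (∫ φ ψ_j ψ_k)`, `B = (∫ φ² ψ_j ψ_k)`.
Summing over coordinates, `E N = tr A` and `E N² = tr B + (tr A)² - tr A²`, so the variance is
`tr B - tr A²`. On the other side, Christoffel–Darboux turns the integrand into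
`(φ(λ₁) - φ(λ₂))² K_n(λ₁, λ₂)² / 2`; expanding the square and
`K_n² = ∑_{j,k} ψ_jψ_k(λ₁) ψ_jψ_k(λ₂)`, the variables separate and the integral is
`tr B / 2 + tr B / 2 - tr A²`.
-/

open MeasureTheory

/-- The determinantal density `p_n(λ) = (det{ψ_{j-1}(λ_k)}_{j,k=1}^n)²/n!` built from the
functions `ψ_0, …, ψ_{n-1}`. -/
noncomputable def detDensity (n : ℕ) (ψ : Fin n → ℝ → ℝ) (lam : Fin n → ℝ) : ℝ :=
  (Matrix.of fun j k : Fin n => ψ j (lam k)).det ^ 2 / (n.factorial : ℝ)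

open Equiv

theorem christoffel_darboux {ψ : ℕ → ℝ → ℝ} {r s : ℕ → ℝ} {n : ℕ}
    (hrec : ∀ l < n, ∀ t : ℝ, t * ψ l t =
      r l * ψ (l + 1) t + s l * ψ l t + (if l = 0 then 0 else r (l - 1) * ψ (l - 1) t))
    (t₁ t₂ : ℝ) :
    r (n - 1) * (ψ n t₁ * ψ (n - 1) t₂ - ψ (n - 1) t₁ * ψ n t₂) =
      (t₁ - t₂) * ∑ j ∈ Finset.range n, ψ j t₁ * ψ j t₂ := by
  induction n with
  | zero => simp
  | succ n ih =>
    have h₁ := hrec n n.lt_succ_self t₁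
    have h₂ := hrec n n.lt_succ_self t₂
    have hprev : (if n = 0 then 0 else r (n - 1) * ψ (n - 1) t₁) * ψ n t₂ -
        ψ n t₁ * (if n = 0 then 0 else r (n - 1) * ψ (n - 1) t₂) =
        -(r (n - 1) * (ψ n t₁ * ψ (n - 1) t₂ - ψ (n - 1) t₁ * ψ n t₂)) := by
      split_ifs with hn
      · simp [hn]
      · ring
    rw [Finset.sum_range_succ, mul_add, ← ih fun l hl => hrec l (hl.trans n.lt_succ_self),
      Nat.add_sub_cancel]
    linear_combination h₂ * ψ n t₁ - h₁ * ψ n t₂ - hprev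

namespace Equiv.Perm

variable {α : Type*} [DecidableEq α]

theorem eq_one_or_eq_swap_of_forall_apply_eq {π : Perm α} {l m : α}
    (h : ∀ k, k ≠ l → k ≠ m → π k = k) : π = 1 ∨ π = swap l m := by
  have hpair : ∀ k, π k = l ∨ π k = m ∨ π k = k := fun k => by
    by_cases hl : π k = l
    · exact .inl hl
    by_cases hm : π k = m
    · exact .inr (.inl hm)
    · exact .inr (.inr (π.injective (h _ hl hm)))
  have hinj : ∀ a b, π a = π b → a = b := fun a b => π.injective.eq_iff.mp
  have hl := hpair l
  have hm := hpair m
  have hlm := hinj l m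
  by_cases hfix : π l = l
  · refine .inl (Perm.ext fun k => ?_)
    have := h k
    rw [Perm.one_apply]
    grind
  · refine .inr (Perm.ext fun k => ?_)
    have := h k
    rw [swap_apply_def]
    grind

variable {ι R : Type*} [Fintype ι] [DecidableEq ι] [CommRing R]

theorem sum_sum_apply {M : Type*} [AddCommMonoid M] (g : ι → M) :
    ∑ σ : Perm ι, ∑ l, g (σ l) = (Fintype.card ι).factorial • ∑ j, g j := by
  simp only [Equiv.sum_comp]
  rw [Finset.sum_const, Finset.card_univ, Fintype.card_perm]

theorem sum_sum_sum_apply {M : Type*} [AddCommMonoid M] (g : ι → ι → M) :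
    ∑ σ : Perm ι, ∑ l, ∑ m, g (σ l) (σ m) = (Fintype.card ι).factorial • ∑ j, ∑ k, g j k := by
  simp only [Equiv.sum_comp _ (g _)]
  exact sum_sum_apply fun j => ∑ k, g j k

-- `∑ π, sign π * ∏ k, M k k (π k)` is the determinant of the matrix whose `k`-th row is the
-- `k`-th row of `M k`.
theorem sum_sign_mul_prod_eq_sum_one_swap (M : ι → Matrix ι ι R) (l m : ι)
    (hM : ∀ k, k ≠ l → k ≠ m → M k = 1) :
    ∑ π : Perm ι, ((sign π : ℤ) : R) * ∏ k, M k k (π k) =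
      ∑ π ∈ {1, swap l m}, ((sign π : ℤ) : R) * ∏ k, M k k (π k) := by
  refine (Finset.sum_subset (Finset.subset_univ _) fun π _ hπ => ?_).symm
  obtain ⟨k, hkl, hkm, hk⟩ : ∃ k, k ≠ l ∧ k ≠ m ∧ π k ≠ k := by
    by_contra! hfix
    rcases eq_one_or_eq_swap_of_forall_apply_eq hfix with rfl | rfl <;> simp at hπ
  rw [Finset.prod_eq_zero (Finset.mem_univ k) (by rw [hM k hkl hkm, Matrix.one_apply_ne hk.symm]),
    mul_zero]

theorem sum_sign_mul_prod_of_eq_one_off (M : ι → Matrix ι ι R) (l : ι)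
    (hM : ∀ k, k ≠ l → M k = 1) :
    ∑ π : Perm ι, ((sign π : ℤ) : R) * ∏ k, M k k (π k) = M l l l := by
  rw [sum_sign_mul_prod_eq_sum_one_swap M l l fun k hk _ => hM k hk, swap_self, ← Perm.one_def,
    Finset.pair_eq_singleton, Finset.sum_singleton]
  simp only [sign_one, Units.val_one, Int.cast_one, one_mul, Perm.one_apply]
  exact Finset.prod_eq_single l (fun k _ hk => by rw [hM k hk, Matrix.one_apply_eq]) (by simp)

theorem sum_sign_mul_prod_of_eq_one_off_pair (M : ι → Matrix ι ι R) {l m : ι} (hlm : l ≠ m)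
    (hM : ∀ k, k ≠ l → k ≠ m → M k = 1) :
    ∑ π : Perm ι, ((sign π : ℤ) : R) * ∏ k, M k k (π k) =
      M l l l * M m m m - M l l m * M m m l := by
  have hdiag : ∀ k, k ≠ l ∧ k ≠ m → M k k k = 1 := fun k hk => by
    rw [hM k hk.1 hk.2, Matrix.one_apply_eq]
  have hswap : ∀ k, k ≠ l ∧ k ≠ m → M k k (swap l m k) = 1 := fun k hk => by
    rw [swap_apply_of_ne_of_ne hk.1 hk.2, hdiag k hk]
  rw [sum_sign_mul_prod_eq_sum_one_swap M l m hM,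
    Finset.sum_pair fun h => hlm (swap_eq_one_iff.mp h.symm), sign_swap hlm, sign_one]
  simp only [Perm.one_apply]
  rw [Finset.prod_eq_mul l m hlm (fun k _ => hdiag k) (by simp) (by simp),
    Finset.prod_eq_mul l m hlm (fun k _ => hswap k) (by simp) (by simp),
    swap_apply_left, swap_apply_right]
  push_cast
  ring

end Equiv.Perm

open Equiv.Perm in
theorem detDensity_eq_sum_sign_mul_prod {n : ℕ} (F : Fin n → ℝ → ℝ) (lam : Fin n → ℝ) :
    detDensity n F lam = (n.factorial : ℝ)⁻¹ * ∑ σ : Perm (Fin n), ∑ π : Perm (Fin n),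
      ((sign π : ℤ) : ℝ) * ∏ k, F (σ k) (lam k) * F (σ (π k)) (lam k) := by
  have hsign : ∀ σ π : Perm (Fin n),
      ((sign σ : ℤ) : ℝ) * ((sign (σ * π) : ℤ) : ℝ) = ((sign π : ℤ) : ℝ) := fun σ π => by
    rw [Perm.sign_mul, Units.val_mul, Int.cast_mul, ← mul_assoc, ← Int.cast_mul, ← Units.val_mul,
      ← sq, Int.units_sq, Units.val_one, Int.cast_one, one_mul]
  rw [detDensity, Matrix.det_apply', sq, Finset.sum_mul_sum, div_eq_inv_mul]
  congr 1
  refine Finset.sum_congr rfl fun σ _ => ?_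
  rw [← Equiv.sum_comp (Equiv.mulLeft σ)]
  refine Finset.sum_congr rfl fun π _ => ?_
  simp only [Matrix.of_apply, Equiv.coe_mulLeft, Perm.mul_apply, Finset.prod_mul_distrib]
  rw [← hsign σ π]
  ring

noncomputable def weightedGram {ι : Type*} (w : ℝ → ℝ) (F : ι → ℝ → ℝ) : Matrix ι ι ℝ :=
  Matrix.of fun j k => ∫ t, w t * (F j t * F k t)

theorem weightedGram_isSymm {ι : Type*} (w : ℝ → ℝ) (F : ι → ℝ → ℝ) :
    (weightedGram w F).IsSymm := by
  ext j k
  simp only [Matrix.transpose_apply, weightedGram, Matrix.of_apply, mul_comm (F k _)]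

theorem integrable_mul_mul_of_memLp {α : Type*} [MeasurableSpace α] {μ : Measure α}
    {w f g : α → ℝ} (hw : MemLp w ⊤ μ) (hf : MemLp f 2 μ) (hg : MemLp g 2 μ) :
    Integrable (fun t => w t * (f t * g t)) μ :=
  (hf.integrable_mul hg).mul_of_top_right hw

theorem prod_mulSingle_apply {ι : Type*} [Fintype ι] [DecidableEq ι] (l : ι) (φ : ℝ → ℝ)
    (x : ι → ℝ) : ∏ k, (Pi.mulSingle l φ : ι → ℝ → ℝ) k (x k) = φ (x l) := by
  rw [Finset.prod_eq_single l (fun k _ hk => by rw [Pi.mulSingle_eq_of_ne hk, Pi.one_apply])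
    (by simp), Pi.mulSingle_eq_same]

theorem memLp_mulSingle {ι α : Type*} [DecidableEq ι] [MeasurableSpace α] {μ : Measure α}
    {φ : α → ℝ} (hφ : MemLp φ ⊤ μ) (l k : ι) : MemLp ((Pi.mulSingle l φ : ι → α → ℝ) k) ⊤ μ := by
  rcases eq_or_ne k l with rfl | hk
  · rwa [Pi.mulSingle_eq_same]
  · rw [Pi.mulSingle_eq_of_ne hk]
    exact memLp_top_const 1

theorem weightedGram_one {ι : Type*} [DecidableEq ι] {F : ι → ℝ → ℝ}
    (hON : ∀ j k, ∫ t, F j t * F k t = if j = k then 1 else 0) : weightedGram 1 F = 1 := by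
  ext j k
  simp [weightedGram, hON, Matrix.one_apply]

theorem Matrix.sum_sum_ite_eq_trace_add_sq_sub_trace_mul {ι : Type*} [Fintype ι] [DecidableEq ι]
    (A B : Matrix ι ι ℝ) :
    ∑ j, ∑ k, (if j = k then B j j else A j j * A k k - A j k * A k j) =
      B.trace + A.trace ^ 2 - (A * A).trace := by
  have hsplit : ∀ j k, (if j = k then B j j else A j j * A k k - A j k * A k j) =
      (if j = k then B j j else 0) + (A j j * A k k - A j k * A k j) := fun j k => by
    rcases eq_or_ne j k with rfl | hjk
    · simp
    · simp [hjk]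
  simp only [hsplit, Finset.sum_add_distrib, Finset.sum_sub_distrib, Finset.sum_ite_eq,
    Finset.mem_univ, if_true, Matrix.trace, Matrix.diag, Matrix.mul_apply, sq, Finset.sum_mul_sum]
  ring

open Equiv.Perm in
theorem prod_mul_detDensity_eq {n : ℕ} (F w : Fin n → ℝ → ℝ) (lam : Fin n → ℝ) :
    (∏ k, w k (lam k)) * detDensity n F lam =
      (n.factorial : ℝ)⁻¹ * ∑ σ : Perm (Fin n), ∑ π : Perm (Fin n), ((sign π : ℤ) : ℝ) *
        ∏ k, (fun t => w k t * (F (σ k) t * F (σ (π k)) t)) (lam k) := by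
  simp only [detDensity_eq_sum_sign_mul_prod, Finset.mul_sum, Finset.prod_mul_distrib]
  refine Finset.sum_congr rfl fun σ _ => Finset.sum_congr rfl fun π _ => ?_
  ring

section DetDensity

open Equiv.Perm

variable {n : ℕ} {F : Fin n → ℝ → ℝ} {φ : ℝ → ℝ}

theorem integrable_prod_mul_detDensity (hF : ∀ j, MemLp (F j) 2 volume) {w : Fin n → ℝ → ℝ}
    (hw : ∀ k, MemLp (w k) ⊤ volume) :
    Integrable (fun lam => (∏ k, w k (lam k)) * detDensity n F lam) := by
  simp_rw [prod_mul_detDensity_eq F w]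
  exact (integrable_finsetSum _ fun σ _ => integrable_finsetSum _ fun π _ =>
    (Integrable.fintype_prod fun k =>
      integrable_mul_mul_of_memLp (hw k) (hF (σ k)) (hF (σ (π k)))).const_mul _).const_mul _

theorem integral_prod_mul_detDensity (hF : ∀ j, MemLp (F j) 2 volume) {w : Fin n → ℝ → ℝ}
    (hw : ∀ k, MemLp (w k) ⊤ volume) :
    ∫ lam, (∏ k, w k (lam k)) * detDensity n F lam =
      (n.factorial : ℝ)⁻¹ * ∑ σ : Perm (Fin n), ∑ π : Perm (Fin n), ((sign π : ℤ) : ℝ) *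
        ∏ k, weightedGram (w k) F (σ k) (σ (π k)) := by
  have hint : ∀ σ π : Perm (Fin n), Integrable fun lam : Fin n → ℝ =>
      ∏ k, (fun t => w k t * (F (σ k) t * F (σ (π k)) t)) (lam k) := fun σ π =>
    Integrable.fintype_prod fun k => integrable_mul_mul_of_memLp (hw k) (hF _) (hF _)
  simp_rw [prod_mul_detDensity_eq F w]
  rw [integral_const_mul, integral_finsetSum _ fun σ _ =>
    integrable_finsetSum _ fun π _ => (hint σ π).const_mul _]
  congr 1
  refine Finset.sum_congr rfl fun σ _ => ?_
  rw [integral_finsetSum _ fun π _ => (hint σ π).const_mul _]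
  refine Finset.sum_congr rfl fun π _ => ?_
  rw [integral_const_mul]
  congr 1
  exact integral_fintype_prod_volume_eq_prod fun k t => w k t * (F (σ k) t * F (σ (π k)) t)

theorem integrable_apply_mul_detDensity (hF : ∀ j, MemLp (F j) 2 volume)
    (hφ : MemLp φ ⊤ volume) (l : Fin n) :
    Integrable (fun lam => φ (lam l) * detDensity n F lam) := by
  simpa only [prod_mulSingle_apply] using integrable_prod_mul_detDensity hF (memLp_mulSingle hφ l)

theorem integrable_apply_mul_apply_mul_detDensity (hF : ∀ j, MemLp (F j) 2 volume)
    (hφ : MemLp φ ⊤ volume) (l m : Fin n) :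
    Integrable (fun lam => φ (lam l) * φ (lam m) * detDensity n F lam) := by
  simpa only [Finset.prod_mul_distrib, prod_mulSingle_apply] using
    integrable_prod_mul_detDensity hF (w := fun k t =>
      (Pi.mulSingle l φ : Fin n → ℝ → ℝ) k t * (Pi.mulSingle m φ : Fin n → ℝ → ℝ) k t)
      fun k => (memLp_mulSingle hφ m k).mul' (memLp_mulSingle hφ l k)

theorem integral_apply_mul_detDensity (hF : ∀ j, MemLp (F j) 2 volume)
    (hON : ∀ j k, ∫ t, F j t * F k t = if j = k then 1 else 0) (hφ : MemLp φ ⊤ volume)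
    (l : Fin n) :
    ∫ lam, φ (lam l) * detDensity n F lam =
      (n.factorial : ℝ)⁻¹ * ∑ σ : Perm (Fin n), weightedGram φ F (σ l) (σ l) := by
  have h := integral_prod_mul_detDensity hF (memLp_mulSingle hφ l)
  simp only [prod_mulSingle_apply] at h
  rw [h]
  congr 1
  refine Finset.sum_congr rfl fun σ _ => ?_
  refine (sum_sign_mul_prod_of_eq_one_off
    (fun k => (weightedGram ((Pi.mulSingle l φ : Fin n → ℝ → ℝ) k) F).submatrix σ σ) l
    fun k hk => ?_).trans (by simp)
  rw [Pi.mulSingle_eq_of_ne hk, weightedGram_one hON, Matrix.submatrix_one_equiv]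

theorem integral_apply_mul_apply_mul_detDensity (hF : ∀ j, MemLp (F j) 2 volume)
    (hON : ∀ j k, ∫ t, F j t * F k t = if j = k then 1 else 0) (hφ : MemLp φ ⊤ volume)
    {l m : Fin n} (hlm : l ≠ m) :
    ∫ lam, φ (lam l) * φ (lam m) * detDensity n F lam =
      (n.factorial : ℝ)⁻¹ * ∑ σ : Perm (Fin n),
        (weightedGram φ F (σ l) (σ l) * weightedGram φ F (σ m) (σ m) -
          weightedGram φ F (σ l) (σ m) * weightedGram φ F (σ m) (σ l)) := by
  have h := integral_prod_mul_detDensity hF (w := fun k t =>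
      (Pi.mulSingle l φ : Fin n → ℝ → ℝ) k t * (Pi.mulSingle m φ : Fin n → ℝ → ℝ) k t)
    fun k => (memLp_mulSingle hφ m k).mul' (memLp_mulSingle hφ l k)
  simp only [Finset.prod_mul_distrib, prod_mulSingle_apply] at h
  rw [h]
  congr 1
  refine Finset.sum_congr rfl fun σ _ => ?_
  refine (sum_sign_mul_prod_of_eq_one_off_pair (fun k => (weightedGram (fun t =>
      (Pi.mulSingle l φ : Fin n → ℝ → ℝ) k t * (Pi.mulSingle m φ : Fin n → ℝ → ℝ) k t) F
      ).submatrix σ σ) hlm fun k hkl hkm => ?_).trans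
    (by simp [Pi.mulSingle_eq_of_ne hlm, Pi.mulSingle_eq_of_ne hlm.symm])
  simp only [Pi.mulSingle_eq_of_ne hkl, Pi.mulSingle_eq_of_ne hkm, Pi.one_apply, mul_one]
  rw [show (fun _ : ℝ => (1 : ℝ)) = 1 from rfl, weightedGram_one hON, Matrix.submatrix_one_equiv]

theorem integral_sum_mul_detDensity (hF : ∀ j, MemLp (F j) 2 volume)
    (hON : ∀ j k, ∫ t, F j t * F k t = if j = k then 1 else 0) (hφ : MemLp φ ⊤ volume) :
    ∫ lam, (∑ l, φ (lam l)) * detDensity n F lam = (weightedGram φ F).trace := by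
  simp_rw [Finset.sum_mul]
  rw [integral_finsetSum _ fun l _ => integrable_apply_mul_detDensity hF hφ l]
  simp_rw [integral_apply_mul_detDensity hF hON hφ]
  rw [← Finset.mul_sum, Finset.sum_comm, sum_sum_apply fun j => weightedGram φ F j j,
    Fintype.card_fin, nsmul_eq_mul, inv_mul_cancel_left₀ (by positivity)]
  rfl

theorem integral_sum_sq_mul_detDensity (hF : ∀ j, MemLp (F j) 2 volume)
    (hON : ∀ j k, ∫ t, F j t * F k t = if j = k then 1 else 0) (hφ : MemLp φ ⊤ volume) :
    ∫ lam, (∑ l, φ (lam l)) ^ 2 * detDensity n F lam =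
      (weightedGram (φ * φ) F).trace + (weightedGram φ F).trace ^ 2 -
        (weightedGram φ F * weightedGram φ F).trace := by
  set A := weightedGram φ F
  set B := weightedGram (φ * φ) F
  set D : Fin n → Fin n → ℝ := fun j k =>
    if j = k then B j j else A j j * A k k - A j k * A k j
  have hpair : ∀ l m, ∫ lam, φ (lam l) * φ (lam m) * detDensity n F lam =
      (n.factorial : ℝ)⁻¹ * ∑ σ : Perm (Fin n), D (σ l) (σ m) := by
    intro l m
    rcases eq_or_ne l m with rfl | hlm
    · simp only [D, if_pos rfl]
      exact integral_apply_mul_detDensity hF hON (hφ.mul' hφ) l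
    · simpa [D, hlm] using integral_apply_mul_apply_mul_detDensity hF hON hφ hlm
  have hint : ∀ l m, Integrable fun lam => φ (lam l) * φ (lam m) * detDensity n F lam :=
    integrable_apply_mul_apply_mul_detDensity hF hφ
  calc ∫ lam, (∑ l, φ (lam l)) ^ 2 * detDensity n F lam
      = ∑ l, ∑ m, ∫ lam, φ (lam l) * φ (lam m) * detDensity n F lam := by
        simp_rw [sq, Finset.sum_mul_sum, Finset.sum_mul]
        rw [integral_finsetSum _ fun l _ => integrable_finsetSum _ fun m _ => hint l m]
        exact Finset.sum_congr rfl fun l _ => integral_finsetSum _ fun m _ => hint l m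
    _ = (n.factorial : ℝ)⁻¹ * ∑ σ : Perm (Fin n), ∑ l, ∑ m, D (σ l) (σ m) := by
        simp_rw [hpair, ← Finset.mul_sum]
        exact congrArg _ ((Finset.sum_congr rfl fun l _ => Finset.sum_comm).trans Finset.sum_comm)
    _ = ∑ j, ∑ k, D j k := by
        rw [sum_sum_sum_apply, Fintype.card_fin, nsmul_eq_mul, inv_mul_cancel_left₀ (by positivity)]
    _ = B.trace + A.trace ^ 2 - (A * A).trace :=
        Matrix.sum_sum_ite_eq_trace_add_sq_sub_trace_mul A B

end DetDensity

theorem mul_mul_sq_sum_eq {ι : Type*} [Fintype ι] (F : ι → ℝ → ℝ) (u v : ℝ → ℝ) (t₁ t₂ : ℝ) :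
    u t₁ * v t₂ * (∑ j, F j t₁ * F j t₂) ^ 2 =
      ∑ j, ∑ k, u t₁ * (F j t₁ * F k t₁) * (v t₂ * (F j t₂ * F k t₂)) := by
  rw [sq, Finset.sum_mul_sum, Finset.mul_sum]
  refine Finset.sum_congr rfl fun j _ => ?_
  rw [Finset.mul_sum]
  exact Finset.sum_congr rfl fun k _ => by ring

section Kernel

variable {ι : Type*} [Fintype ι] {F : ι → ℝ → ℝ}

theorem integrable_mul_mul_sq_sum (hF : ∀ j, MemLp (F j) 2 volume) {u v : ℝ → ℝ}
    (hu : MemLp u ⊤ volume) (hv : MemLp v ⊤ volume) :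
    Integrable (fun p : ℝ × ℝ => u p.1 * v p.2 * (∑ j, F j p.1 * F j p.2) ^ 2)
      (volume.prod volume) := by
  simp only [mul_mul_sq_sum_eq]
  exact integrable_finsetSum _ fun j _ => integrable_finsetSum _ fun k _ =>
    (integrable_mul_mul_of_memLp hu (hF j) (hF k)).mul_prod
      (integrable_mul_mul_of_memLp hv (hF j) (hF k))

theorem integral_mul_mul_sq_sum (hF : ∀ j, MemLp (F j) 2 volume) {u v : ℝ → ℝ}
    (hu : MemLp u ⊤ volume) (hv : MemLp v ⊤ volume) :
    ∫ p : ℝ × ℝ, u p.1 * v p.2 * (∑ j, F j p.1 * F j p.2) ^ 2 ∂(volume.prod volume) =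
      (weightedGram u F * weightedGram v F).trace := by
  have hint : ∀ j k, Integrable (fun p : ℝ × ℝ =>
      u p.1 * (F j p.1 * F k p.1) * (v p.2 * (F j p.2 * F k p.2))) (volume.prod volume) :=
    fun j k => (integrable_mul_mul_of_memLp hu (hF j) (hF k)).mul_prod
      (integrable_mul_mul_of_memLp hv (hF j) (hF k))
  simp only [mul_mul_sq_sum_eq]
  rw [integral_finsetSum _ fun j _ => integrable_finsetSum _ fun k _ => hint j k]
  refine Finset.sum_congr rfl fun j _ => ?_
  rw [integral_finsetSum _ fun k _ => hint j k]
  refine Finset.sum_congr rfl fun k _ => ?_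
  show _ = weightedGram u F j k * weightedGram v F k j
  rw [(weightedGram_isSymm v F).apply j k]
  exact integral_prod_mul (fun t => u t * (F j t * F k t)) (fun t => v t * (F j t * F k t))

theorem integral_integral_sq_sub_mul_sq_sum [DecidableEq ι] (hF : ∀ j, MemLp (F j) 2 volume)
    (hON : ∀ j k, ∫ t, F j t * F k t = if j = k then 1 else 0) {φ : ℝ → ℝ}
    (hφ : MemLp φ ⊤ volume) :
    ∫ t₁, ∫ t₂, (φ t₁ - φ t₂) ^ 2 * (∑ j, F j t₁ * F j t₂) ^ 2 / 2 =
      (weightedGram (φ * φ) F).trace - (weightedGram φ F * weightedGram φ F).trace := by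
  have hφφ : MemLp (φ * φ) ⊤ volume := hφ.mul' hφ
  have h1 : MemLp (1 : ℝ → ℝ) ⊤ volume := memLp_top_const 1
  have hsplit : ∀ p : ℝ × ℝ, (φ p.1 - φ p.2) ^ 2 * (∑ j, F j p.1 * F j p.2) ^ 2 / 2 =
      ((φ * φ) p.1 * (1 : ℝ → ℝ) p.2 * (∑ j, F j p.1 * F j p.2) ^ 2 +
        (1 : ℝ → ℝ) p.1 * (φ * φ) p.2 * (∑ j, F j p.1 * F j p.2) ^ 2) / 2 -
        φ p.1 * φ p.2 * (∑ j, F j p.1 * F j p.2) ^ 2 := fun p => by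
    simp only [Pi.mul_apply, Pi.one_apply]
    ring
  have hB1 := integrable_mul_mul_sq_sum hF hφφ h1
  have hB2 := integrable_mul_mul_sq_sum hF h1 hφφ
  have hA := integrable_mul_mul_sq_sum hF hφ hφ
  have hB : Integrable (fun p : ℝ × ℝ =>
      ((φ * φ) p.1 * (1 : ℝ → ℝ) p.2 * (∑ j, F j p.1 * F j p.2) ^ 2 +
        (1 : ℝ → ℝ) p.1 * (φ * φ) p.2 * (∑ j, F j p.1 * F j p.2) ^ 2) / 2) (volume.prod volume) :=
    (hB1.add hB2).div_const 2
  have hint : Integrable (fun p : ℝ × ℝ =>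
      (φ p.1 - φ p.2) ^ 2 * (∑ j, F j p.1 * F j p.2) ^ 2 / 2) (volume.prod volume) := by
    simp only [hsplit]
    exact hB.sub hA
  rw [integral_integral (f := fun t₁ t₂ => (φ t₁ - φ t₂) ^ 2 * (∑ j, F j t₁ * F j t₂) ^ 2 / 2)
    hint]
  simp only [hsplit]
  rw [integral_sub hB hA, integral_div, integral_add hB1 hB2,
    integral_mul_mul_sq_sum hF hφφ h1, integral_mul_mul_sq_sum hF h1 hφφ,
    integral_mul_mul_sq_sum hF hφ hφ, weightedGram_one hON, Matrix.mul_one, Matrix.one_mul]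
  ring

end Kernel

theorem variance_linear_statistic_christoffel_darboux_general (n : ℕ)
    (ψ : ℕ → ℝ → ℝ) (r s : ℕ → ℝ)
    (hL2 : ∀ l ≤ n, MemLp (ψ l) 2 (volume : Measure ℝ))
    (horth : ∀ l ≤ n, ∀ m ≤ n,
      (∫ t : ℝ, ψ l t * ψ m t) = if l = m then (1 : ℝ) else 0)
    (hrec : ∀ l < n, ∀ t : ℝ, t * ψ l t =
      r l * ψ (l + 1) t + s l * ψ l t +
        (if l = 0 then 0 else r (l - 1) * ψ (l - 1) t))
    (φ : ℝ → ℝ) (hφm : Measurable φ) (hφb : ∃ C : ℝ, ∀ t, |φ t| ≤ C) :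
    (∫ lam : Fin n → ℝ,
        (∑ l, φ (lam l)) ^ 2 * detDensity n (fun l : Fin n => ψ l) lam) -
        (∫ lam : Fin n → ℝ,
          (∑ l, φ (lam l)) * detDensity n (fun l : Fin n => ψ l) lam) ^ 2 =
      ∫ t₁ : ℝ, ∫ t₂ : ℝ, ((φ t₁ - φ t₂) / (t₁ - t₂)) ^ 2 *
        ((r (n - 1) * (ψ n t₁ * ψ (n - 1) t₂ - ψ (n - 1) t₁ * ψ n t₂)) ^ 2 / 2) := by
  have hF : ∀ j : Fin n, MemLp (ψ j) 2 volume := fun j => hL2 j j.2.le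
  have hON : ∀ j k : Fin n, ∫ t, ψ j t * ψ k t = if j = k then 1 else 0 := fun j k => by
    simp [horth j j.2.le k k.2.le, Fin.val_inj]
  obtain ⟨C, hC⟩ := hφb
  have hφ : MemLp φ ⊤ volume := memLp_top_of_bound hφm.aestronglyMeasurable C (ae_of_all _ hC)
  have hkernel : ∀ t₁ t₂ : ℝ, ((φ t₁ - φ t₂) / (t₁ - t₂)) ^ 2 *
      ((r (n - 1) * (ψ n t₁ * ψ (n - 1) t₂ - ψ (n - 1) t₁ * ψ n t₂)) ^ 2 / 2) =
        (φ t₁ - φ t₂) ^ 2 * (∑ j : Fin n, ψ j t₁ * ψ j t₂) ^ 2 / 2 := fun t₁ t₂ => by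
    rw [christoffel_darboux hrec, Fin.sum_univ_eq_sum_range (fun j => ψ j t₁ * ψ j t₂)]
    -- on the diagonal both sides vanish, the left one through `x / 0 = 0`
    rcases eq_or_ne t₁ t₂ with rfl | h
    · simp
    · field_simp [sub_ne_zero.mpr h]
  simp_rw [hkernel]
  rw [integral_sum_sq_mul_detDensity hF hON hφ, integral_sum_mul_detDensity hF hON hφ,
    integral_integral_sq_sub_mul_sq_sum hF hON hφ]
  ring

/-- Christoffel–Darboux form of the variance: for orthonormal `ψ_0, …, ψ_n` in `L²(ℝ)`
satisfying the three-term recurrence `λψ_l = r_l ψ_{l+1} + s_l ψ_l + r_{l-1} ψ_{l-1}`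
(`r_{-1} = 0`), the variance of `Σ_l φ(λ_l)` with respect to `p_n` equals
`∬ ((φ(λ₁)-φ(λ₂))/(λ₁-λ₂))² · (1/2)[r_{n-1}(ψ_n(λ₁)ψ_{n-1}(λ₂)-ψ_{n-1}(λ₁)ψ_n(λ₂))]² dλ₁ dλ₂`. -/
theorem variance_linear_statistic_christoffel_darboux (n : ℕ) (hn : 1 ≤ n)
    (ψ : ℕ → ℝ → ℝ) (r s : ℕ → ℝ)
    (hmeas : ∀ l ≤ n, Measurable (ψ l))
    (hL2 : ∀ l ≤ n, MemLp (ψ l) 2 (volume : Measure ℝ))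
    (horth : ∀ l ≤ n, ∀ m ≤ n,
      (∫ t : ℝ, ψ l t * ψ m t) = if l = m then (1 : ℝ) else 0)
    (hr : ∀ l < n, 0 < r l)
    (hrec : ∀ l < n, ∀ t : ℝ, t * ψ l t =
      r l * ψ (l + 1) t + s l * ψ l t +
        (if l = 0 then 0 else r (l - 1) * ψ (l - 1) t))
    (φ : ℝ → ℝ) (hφm : Measurable φ) (hφb : ∃ C : ℝ, ∀ t, |φ t| ≤ C) :
    (∫ lam : Fin n → ℝ,
        (∑ l, φ (lam l)) ^ 2 * detDensity n (fun l : Fin n => ψ l) lam) -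
        (∫ lam : Fin n → ℝ,
          (∑ l, φ (lam l)) * detDensity n (fun l : Fin n => ψ l) lam) ^ 2 =
      ∫ t₁ : ℝ, ∫ t₂ : ℝ, ((φ t₁ - φ t₂) / (t₁ - t₂)) ^ 2 *
        ((r (n - 1) * (ψ n t₁ * ψ (n - 1) t₂ - ψ (n - 1) t₁ * ψ n t₂)) ^ 2 / 2) :=
  variance_linear_statistic_christoffel_darboux_general n ψ r s hL2 horth hrec φ hφm hφb
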